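/- Let U and U₀ be unitary operators on a separable Hilbert space 𝓗 with U − U₀ trace class, and set W_t = U^{−t}U₀^{t} for t ∈ ℕ. Then for all t, s ∈ ℕ with t ≠ s, s-lim_{r→∞} (W_t − W_s) U₀^{r} Π_ac(U₀) = 0. -/

import Mathlib

noncomputable section
open MeasureTheory Filter Topology Complex

/-- A bounded operator on a Hilbert space is trace class iff it admits a nuclear
representation `T = ∑ₙ |aₙ⟩⟨bₙ|` with `∑ₙ ‖aₙ‖‖bₙ‖ < ∞` (in a Hilbert space this is
equivalent to `Tr |T| < ∞`). -/
def IsTraceClass {E : Type*} [NormedAddCommGroup E] [InnerProductSpace ℂ E]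
    (T : E →L[ℂ] E) : Prop :=
  ∃ a b : ℕ → E, Summable (fun n => ‖a n‖ * ‖b n‖) ∧
    ∀ ψ, T ψ = ∑' n, (inner ℂ (b n) ψ : ℂ) • a n

/-- `μ` is the spectral measure of the unitary `U` at the vector `ψ`, i.e. the finite
Borel measure on `[0,2π)` with `⟨ψ, Uᵗψ⟩ = ∫ e^{itλ} dμ(λ)` for all `t ∈ ℤ`. -/
def IsVectorSpectralMeasure {E : Type*} [NormedAddCommGroup E] [InnerProductSpace ℂ E]
    [CompleteSpace E] (U : unitary (E →L[ℂ] E)) (ψ : E) (μ : Measure ℝ) : Prop :=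
  IsFiniteMeasure μ ∧ μ (Set.Ico 0 (2 * Real.pi))ᶜ = 0 ∧
    ∀ t : ℤ, (inner ℂ ψ (((U ^ t : unitary (E →L[ℂ] E)) : E →L[ℂ] E) ψ) : ℂ)
      = ∫ l, Complex.exp (Complex.I * t * l) ∂μ

/-- `ψ` belongs to the subspace of absolute continuity of the unitary `U`:
its spectral measure is absolutely continuous w.r.t. Lebesgue measure. -/
def IsAcVector {E : Type*} [NormedAddCommGroup E] [InnerProductSpace ℂ E]
    [CompleteSpace E] (U : unitary (E →L[ℂ] E)) (ψ : E) : Prop :=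
  ∃ μ : Measure ℝ, IsVectorSpectralMeasure U ψ μ ∧ μ ≪ volume

/-- `P` is the orthogonal projection of a Hilbert space onto the set `S`
(which is required to be its fixed-point set). -/
def IsOrthoProjOnto {E : Type*} [NormedAddCommGroup E] [InnerProductSpace ℂ E]
    [CompleteSpace E] (P : E →L[ℂ] E) (S : Set E) : Prop :=
  IsSelfAdjoint P ∧ P.comp P = P ∧ ∀ ψ, (P ψ = ψ ↔ ψ ∈ S)
variable {E : Type*} [NormedAddCommGroup E] [InnerProductSpace ℂ E]
  [CompleteSpace E] [TopologicalSpace.SeparableSpace E]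

/-!
Telescoping gives `W_t - W_{t+1} = U^{-(t+1)} (U - U₀) U₀^t`, so it suffices that `(U - U₀) U₀^r φ → 0`
for every absolutely continuous vector `φ` of `U₀`. By Riemann–Lebesgue the matrix elements
`⟪U₀^k φ, U₀^r φ⟫ = μ̂_φ(r - k)` tend to zero; as `U₀^r φ` is bounded and stays in the closed span of
the `U₀^k φ`, it converges weakly to zero. A trace class operator `∑ₙ |aₙ⟩⟨bₙ|` turns bounded weakly
null sequences into norm null ones, by dominated convergence in `n`.
-/

theorem tendsto_integral_cexp_mul_cocompact_of_absolutelyContinuous (μ : Measure ℝ)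
    [SigmaFinite μ] (hac : μ ≪ volume) :
    Tendsto (fun w : ℝ => ∫ l, cexp (I * w * l) ∂μ) (cocompact ℝ) (𝓝 0) := by
  -- Mathlib's Fourier kernel is `𝐞 (-w v) = exp (-2πi w v)`, hence the rescaling `w ↦ -w / (2π)`.
  have hπ : (2 * Real.pi : ℝ) ≠ 0 := by positivity
  have hscale : Tendsto (fun w : ℝ => -w * (2 * Real.pi)⁻¹) (cocompact ℝ) (cocompact ℝ) :=
    ((Homeomorph.neg ℝ).trans (Homeomorph.mulRight₀ _ (inv_ne_zero hπ))).map_cocompact.le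
  convert (Real.tendsto_integral_exp_smul_cocompact
    (fun v : ℝ => ((μ.rnDeriv volume v).toReal : ℂ))).comp hscale using 2 with w
  rw [← integral_rnDeriv_smul hac]
  refine integral_congr_ae (Eventually.of_forall fun v => ?_)
  simp only [Circle.smul_def, Real.fourierChar_apply, real_smul]
  push_cast
  field_simp
  ring_nf

section WeakNull

variable {α H : Type*} [NormedAddCommGroup H] [InnerProductSpace ℂ H]

def weakNullSubmodule (x : α → H) (l : Filter α) : Submodule ℂ H where
  carrier := {b | Tendsto (fun r => inner ℂ b (x r)) l (𝓝 0)}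
  add_mem' {b c} hb hc := by simpa [inner_add_left] using hb.add hc
  zero_mem' := by simpa using tendsto_const_nhds
  smul_mem' c b hb := by simpa [inner_smul_left] using hb.mul_const (starRingEnd ℂ c)

theorem mem_weakNullSubmodule {x : α → H} {l : Filter α} {b : H} :
    b ∈ weakNullSubmodule x l ↔ Tendsto (fun r => inner ℂ b (x r)) l (𝓝 0) :=
  Iff.rfl

theorem isClosed_weakNullSubmodule {x : α → H} {C : ℝ} (hx : ∀ r, ‖x r‖ ≤ C) (l : Filter α) :
    IsClosed (weakNullSubmodule x l : Set H) := by
  refine isClosed_of_closure_subset fun b hb => ?_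
  have : (𝓝[weakNullSubmodule x l] b).NeBot := mem_closure_iff_nhdsWithin_neBot.mp hb
  have hunif : TendstoUniformly (fun c r => inner ℂ c (x r)) (fun r => inner ℂ b (x r))
      (𝓝[weakNullSubmodule x l] b) := by
    rw [Metric.tendstoUniformly_iff]
    intro ε hε
    have hclose : Tendsto (fun c => ‖b - c‖ * C) (𝓝 b) (𝓝 0) := by
      simpa using (((continuous_const (y := b)).sub continuous_id).norm.mul_const C).tendsto b
    filter_upwards [nhdsWithin_le_nhds (hclose.eventually (gt_mem_nhds hε))] with c hc r
    calc dist (inner ℂ b (x r)) (inner ℂ c (x r)) = ‖inner ℂ (b - c) (x r)‖ := by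
          rw [dist_eq_norm, inner_sub_left]
      _ ≤ ‖b - c‖ * ‖x r‖ := norm_inner_le_norm _ _
      _ ≤ ‖b - c‖ * C := by gcongr; exact hx r
      _ < ε := hc
  exact hunif.tendsto_of_eventually_tendsto (eventually_nhdsWithin_of_forall fun c hc => hc)
    tendsto_const_nhds

theorem weakNullSubmodule_eq_top [CompleteSpace H] {x : α → H} {C : ℝ} (hx : ∀ r, ‖x r‖ ≤ C)
    {l : Filter α} {S : Set H} (hS : ∀ b ∈ S, Tendsto (fun r => inner ℂ b (x r)) l (𝓝 0))
    (hxS : ∀ r, x r ∈ (Submodule.span ℂ S).topologicalClosure) :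
    weakNullSubmodule x l = ⊤ := by
  set M := (Submodule.span ℂ S).topologicalClosure
  have hM : M ≤ weakNullSubmodule x l :=
    Submodule.topologicalClosure_minimal _ (Submodule.span_le.mpr hS)
      (isClosed_weakNullSubmodule hx l)
  have hMperp : Mᗮ ≤ weakNullSubmodule x l := fun b hb => by
    simpa [mem_weakNullSubmodule, Submodule.inner_left_of_mem_orthogonal (hxS _) hb]
      using tendsto_const_nhds
  rw [eq_top_iff, ← Submodule.sup_orthogonal_of_hasOrthogonalProjection (K := M)]
  exact sup_le hM hMperp

theorem IsTraceClass.tendsto_apply_of_tendsto_inner [CompleteSpace H] {T : H →L[ℂ] H}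
    (hT : IsTraceClass T) {x : α → H} {C : ℝ} (hx : ∀ r, ‖x r‖ ≤ C) {l : Filter α}
    (hw : ∀ b, Tendsto (fun r => inner ℂ b (x r)) l (𝓝 0)) :
    Tendsto (fun r => T (x r)) l (𝓝 0) := by
  obtain ⟨a, b, hsum, hrep⟩ := hT
  simp only [hrep]
  have hbound (r : α) (n : ℕ) : ‖inner ℂ (b n) (x r) • a n‖ ≤ ‖a n‖ * ‖b n‖ * C := calc
    ‖inner ℂ (b n) (x r) • a n‖ = ‖inner ℂ (b n) (x r)‖ * ‖a n‖ := norm_smul _ _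
    _ ≤ ‖b n‖ * ‖x r‖ * ‖a n‖ := by gcongr; exact norm_inner_le_norm _ _
    _ ≤ ‖b n‖ * C * ‖a n‖ := by gcongr; exact hx r
    _ = ‖a n‖ * ‖b n‖ * C := by ring
  simpa using tendsto_tsum_of_dominated_convergence (hsum.mul_right C) (g := fun _ => 0)
    (fun n => by simpa using (hw (b n)).smul_const (a n)) (Eventually.of_forall hbound)

end WeakNull

section UnitaryPowers

variable {H : Type*} [NormedAddCommGroup H] [InnerProductSpace ℂ H] [CompleteSpace H]

theorem IsVectorSpectralMeasure.tendsto_inner_zpow_atTop {U : unitary (H →L[ℂ] H)} {φ : H}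
    {μ : Measure ℝ} (hμ : IsVectorSpectralMeasure U φ μ) (hac : μ ≪ volume) :
    Tendsto (fun n : ℤ => inner ℂ φ ((↑(U ^ n) : H →L[ℂ] H) φ)) atTop (𝓝 0) := by
  obtain ⟨hfin, -, hfourier⟩ := hμ
  simp only [hfourier]
  exact (tendsto_integral_cexp_mul_cocompact_of_absolutelyContinuous μ hac).comp
    (tendsto_intCast_atTop_atTop.mono_right atTop_le_cocompact)

theorem IsAcVector.tendsto_inner_pow {U : unitary (H →L[ℂ] H)} {φ : H} (hφ : IsAcVector U φ)
    (b : H) : Tendsto (fun r : ℕ => inner ℂ b ((↑(U ^ r) : H →L[ℂ] H) φ)) atTop (𝓝 0) := by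
  obtain ⟨μ, hμ, hac⟩ := hφ
  have hgen (k : ℤ) :
      Tendsto (fun r : ℕ => inner ℂ ((↑(U ^ k) : H →L[ℂ] H) φ) ((↑(U ^ r) : H →L[ℂ] H) φ))
        atTop (𝓝 0) := by
    have hshift : Tendsto (fun r : ℕ => (r : ℤ) - k) atTop atTop :=
      tendsto_atTop_add_const_right _ _ tendsto_natCast_atTop_atTop
    refine ((hμ.tendsto_inner_zpow_atTop hac).comp hshift).congr fun r => ?_
    have hsplit : U ^ r = U ^ k * U ^ ((r : ℤ) - k) := by
      rw [← zpow_add, add_sub_cancel, zpow_natCast]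
    rw [Function.comp_apply, ← Unitary.inner_map_map (U ^ k), hsplit]
    rfl
  have hnull : weakNullSubmodule (fun r : ℕ => (↑(U ^ r) : H →L[ℂ] H) φ) atTop = ⊤ :=
    weakNullSubmodule_eq_top (fun r => (Unitary.norm_map _ φ).le) (Set.forall_mem_range.mpr hgen)
      fun r => Submodule.le_topologicalClosure _ (Submodule.subset_span ⟨r, by simp⟩)
  exact (hnull ▸ Submodule.mem_top : b ∈ weakNullSubmodule _ _)

theorem IsOrthoProjOnto.apply_mem {P : H →L[ℂ] H} {S : Set H} (hP : IsOrthoProjOnto P S)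
    (ψ : H) : P ψ ∈ S :=
  (hP.2.2 (P ψ)).mp congr($(hP.2.1) ψ)

variable (U U0 : unitary (H →L[ℂ] H))

def waveOp (t : ℕ) : unitary (H →L[ℂ] H) := (U ^ t)⁻¹ * U0 ^ t

theorem waveOp_apply_sub_waveOp_succ_apply (t : ℕ) (y : H) :
    (↑(waveOp U U0 t) : H →L[ℂ] H) y - (↑(waveOp U U0 (t + 1)) : H →L[ℂ] H) y =
      (↑((U ^ (t + 1))⁻¹) : H →L[ℂ] H) (((U : H →L[ℂ] H) - U0) ((↑(U0 ^ t) : H →L[ℂ] H) y)) := by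
  have hU : (U ^ t)⁻¹ = (U ^ (t + 1))⁻¹ * U := by
    rw [pow_succ', mul_inv_rev, inv_mul_cancel_right]
  rw [waveOp, waveOp, hU, pow_succ' U0]
  simp only [Submonoid.coe_mul, mul_apply_eq_comp, sub_apply, map_sub]

theorem tendsto_waveOp_apply_sub_self {φ : H}
    (hD : Tendsto (fun r : ℕ => ((U : H →L[ℂ] H) - U0) ((↑(U0 ^ r) : H →L[ℂ] H) φ)) atTop (𝓝 0))
    (t : ℕ) :
    Tendsto (fun r : ℕ => (↑(waveOp U U0 t) : H →L[ℂ] H) ((↑(U0 ^ r) : H →L[ℂ] H) φ)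
      - (↑(U0 ^ r) : H →L[ℂ] H) φ) atTop (𝓝 0) := by
  induction t with
  | zero => simp [waveOp]
  | succ t ih =>
    have hshift (r : ℕ) : (↑(U0 ^ t) : H →L[ℂ] H) ((↑(U0 ^ r) : H →L[ℂ] H) φ)
        = (↑(U0 ^ (r + t)) : H →L[ℂ] H) φ := by
      rw [add_comm, pow_add]; rfl
    have hstep : Tendsto (fun r : ℕ => (↑(waveOp U U0 t) : H →L[ℂ] H) ((↑(U0 ^ r) : H →L[ℂ] H) φ)
        - (↑(waveOp U U0 (t + 1)) : H →L[ℂ] H) ((↑(U0 ^ r) : H →L[ℂ] H) φ)) atTop (𝓝 0) := by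
      simp only [waveOp_apply_sub_waveOp_succ_apply, hshift]
      exact ((↑((U ^ (t + 1))⁻¹) : H →L[ℂ] H).continuous.tendsto' 0 0 (map_zero _)).comp
        (hD.comp (tendsto_add_atTop_nat t))
    simpa using ih.sub hstep

end UnitaryPowers

theorem Wt_diff_slim_zero_on_ac_general
    (U U0 : unitary (E →L[ℂ] E))
    (hT : IsTraceClass ((U : E →L[ℂ] E) - (U0 : E →L[ℂ] E)))
    (Pac0 : E →L[ℂ] E) (hPac0 : IsOrthoProjOnto Pac0 {ψ : E | IsAcVector U0 ψ})
    (t s : ℕ) :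
    ∀ ψ : E, Tendsto
      (fun r : ℕ =>
        (((((U ^ t)⁻¹ * U0 ^ t) : unitary (E →L[ℂ] E)) : E →L[ℂ] E) - ((((U ^ s)⁻¹ * U0 ^ s) : unitary (E →L[ℂ] E)) : E →L[ℂ] E))
          ((((U0 ^ r) : unitary (E →L[ℂ] E)) : E →L[ℂ] E) (Pac0 ψ)))
      atTop (𝓝 0) := by
  intro ψ
  have hac : IsAcVector U0 (Pac0 ψ) := hPac0.apply_mem ψ
  have hD := hT.tendsto_apply_of_tendsto_inner (fun r => (Unitary.norm_map _ _).le)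
    hac.tendsto_inner_pow
  have hW := tendsto_waveOp_apply_sub_self U U0 hD
  simpa [waveOp] using (hW t).sub (hW s)

/-- Lemma 3.4: with `W_t = U^{-t}U₀^t`,
`s-lim_{r→∞} (W_t − W_s) U₀^r Π_ac(U₀) = 0`. -/
theorem Wt_diff_slim_zero_on_ac
    (U U0 : unitary (E →L[ℂ] E))
    (hT : IsTraceClass ((U : E →L[ℂ] E) - (U0 : E →L[ℂ] E)))
    (Pac0 : E →L[ℂ] E) (hPac0 : IsOrthoProjOnto Pac0 {ψ : E | IsAcVector U0 ψ})
    (t s : ℕ) (hts : t ≠ s) :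
    ∀ ψ : E, Tendsto
      (fun r : ℕ =>
        (((((U ^ t)⁻¹ * U0 ^ t) : unitary (E →L[ℂ] E)) : E →L[ℂ] E) - ((((U ^ s)⁻¹ * U0 ^ s) : unitary (E →L[ℂ] E)) : E →L[ℂ] E))
          ((((U0 ^ r) : unitary (E →L[ℂ] E)) : E →L[ℂ] E) (Pac0 ψ)))
      atTop (𝓝 0) :=
  Wt_diff_slim_zero_on_ac_general U U0 hT Pac0 hPac0 t s
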